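/- arXiv:2003.00352 — 6 statements merged into one kernel-verified Lean document; each statement's English description precedes it below -/
import Mathlib

section
/- Under the Galerkin error relations and the continuous and discrete optimality conditions, the estimate (4.4) of Theorem 4.2 holds: α‖ū − ū_h‖² + ‖ȳ − ȳ_h‖² ≤ (1/α)‖p̄ − p^h‖² + ‖ȳ − y^h‖². -/
open scoped RealInnerProductSpace

/-- Estimate (4.4) of Theorem 4.2:
`α‖ū − ū_h‖² + ‖ȳ − ȳ_h‖² ≤ (1/α)‖p̄ − p^h‖² + ‖ȳ − y^h‖²`. -/
theorem cutfem_error_estimate_4_4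
    {H : Type*} [NormedAddCommGroup H] [InnerProductSpace ℝ H]
    (V : Submodule ℝ H) (b : V →ₗ[ℝ] V →ₗ[ℝ] ℝ)
    (α : ℝ) (hα : 0 < α)
    (ybar pbar ubar : H) (yh ph : V) (uh : H) (yH pH : V)
    (hcont : α • ubar + pbar = 0)
    (hdisc : α • uh + (ph : H) = 0)
    (hG1 : ∀ v : V, b (yh - yH) v = ⟪uh - ubar, (v : H)⟫)
    (hG2 : ∀ v : V, b v (ph - pH) = ⟪(yh : H) - ybar, (v : H)⟫) :
    α * ‖ubar - uh‖ ^ 2 + ‖ybar - (yh : H)‖ ^ 2 ≤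
      (1 / α) * ‖pbar - (pH : H)‖ ^ 2 + ‖ybar - (yH : H)‖ ^ 2 := by
  -- key Galerkin identity
  have hkey : ⟪uh - ubar, (ph : H) - (pH : H)⟫ =
      ⟪(yh : H) - ybar, (yh : H) - (yH : H)⟫ := by
    have h1 := hG1 (ph - pH)
    have h2 := hG2 (yh - yH)
    push_cast at h1 h2
    exact h1.symm.trans h2
  -- optimality: pbar - ph = -α • (ubar - uh)
  have hopt : pbar - (ph : H) = (-α) • (ubar - uh) := by
    have h1 : pbar = -(α • ubar) := eq_neg_of_add_eq_zero_right hcont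
    have h2 : (ph : H) = -(α • uh) := eq_neg_of_add_eq_zero_right hdisc
    rw [h1, h2]
    module
  -- A = inner (uh - ubar) (pbar - pH)
  have hA : ⟪uh - ubar, pbar - (pH : H)⟫ =
      α * ‖ubar - uh‖ ^ 2 + ⟪uh - ubar, (ph : H) - (pH : H)⟫ := by
    have : pbar - (pH : H) = ((-α) • (ubar - uh)) + ((ph : H) - (pH : H)) := by
      rw [← hopt]; abel
    rw [this, inner_add_right, real_inner_smul_right]
    have : ⟪uh - ubar, ubar - uh⟫ = -‖ubar - uh‖ ^ 2 := by
      rw [show uh - ubar = -(ubar - uh) by abel, inner_neg_left,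
        real_inner_self_eq_norm_sq]
    rw [this]; ring
  have hB : ⟪(yh : H) - ybar, (yh : H) - (yH : H)⟫ =
      ‖ybar - (yh : H)‖ ^ 2 + ⟪(yh : H) - ybar, ybar - (yH : H)⟫ := by
    have : (yh : H) - (yH : H) = ((yh : H) - ybar) + (ybar - (yH : H)) := by abel
    rw [this, inner_add_right, real_inner_self_eq_norm_sq, ← norm_neg ((yh : H) - ybar)]
    congr 2
    abel
  -- combine: α‖eu‖² + ‖ey‖² = A - B'
  have hiden : α * ‖ubar - uh‖ ^ 2 + ‖ybar - (yh : H)‖ ^ 2 =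
      ⟪uh - ubar, pbar - (pH : H)⟫ - ⟪(yh : H) - ybar, ybar - (yH : H)⟫ := by
    rw [hA, hkey, hB]; ring
  have cs1 : ⟪uh - ubar, pbar - (pH : H)⟫ ≤ ‖ubar - uh‖ * ‖pbar - (pH : H)‖ := by
    have := real_inner_le_norm (uh - ubar) (pbar - (pH : H))
    rwa [← norm_neg (uh - ubar), show -(uh - ubar) = ubar - uh by abel] at this
  have cs2 : -⟪(yh : H) - ybar, ybar - (yH : H)⟫ ≤
      ‖ybar - (yh : H)‖ * ‖ybar - (yH : H)‖ := by
    have := real_inner_le_norm (ybar - (yh : H)) (ybar - (yH : H))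
    have h' : ⟪ybar - (yh : H), ybar - (yH : H)⟫ = -⟪(yh : H) - ybar, ybar - (yH : H)⟫ := by
      rw [show ybar - (yh : H) = -((yh : H) - ybar) by abel, inner_neg_left]
    linarith [this, h'.symm.le, h'.le]
  set a := ‖ubar - uh‖
  set c := ‖ybar - (yh : H)‖
  set p := ‖pbar - (pH : H)‖
  set d := ‖ybar - (yH : H)‖
  have hmain : α * a ^ 2 + c ^ 2 ≤ a * p + c * d := by
    rw [hiden]; linarith
  have h2 : α * (α * a ^ 2 + c ^ 2) ≤ p ^ 2 + α * d ^ 2 := by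
    nlinarith [sq_nonneg (α * a - p), mul_nonneg hα.le (sq_nonneg (c - d)),
      mul_le_mul_of_nonneg_left hmain hα.le]
  calc α * a ^ 2 + c ^ 2 = (1 / α) * (α * (α * a ^ 2 + c ^ 2)) := by
        field_simp
    _ ≤ (1 / α) * (p ^ 2 + α * d ^ 2) :=
        mul_le_mul_of_nonneg_left h2 (by positivity)
    _ = (1 / α) * p ^ 2 + d ^ 2 := by field_simp
end

section
/- Under the Galerkin error relations, the key intermediate bound (4.12) in the proof of Theorem 4.2 holds: ⟨p^h − p̄_h, ū_h − ū⟩ ≤ −(1/2)‖ȳ − ȳ_h‖² + (1/2)‖ȳ − y^h‖². -/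
open scoped RealInnerProductSpace

/-- Intermediate bound (4.12) in the proof of Theorem 4.2:
`⟨p^h − p̄_h, ū_h − ū⟩ ≤ −(1/2)‖ȳ − ȳ_h‖² + (1/2)‖ȳ − y^h‖²`. -/
theorem cutfem_intermediate_bound_4_12
    {H : Type*} [NormedAddCommGroup H] [InnerProductSpace ℝ H]
    (V : Submodule ℝ H) (b : V →ₗ[ℝ] V →ₗ[ℝ] ℝ)
    (ybar ubar : H) (yh ph : V) (uh : H) (yH pH : V)
    (hG1 : ∀ v : V, b (yh - yH) v = ⟪uh - ubar, (v : H)⟫)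
    (hG2 : ∀ v : V, b v (ph - pH) = ⟪(yh : H) - ybar, (v : H)⟫) :
    ⟪((pH - ph : V) : H), uh - ubar⟫ ≤
      -(1 / 2) * ‖ybar - (yh : H)‖ ^ 2 + (1 / 2) * ‖ybar - (yH : H)‖ ^ 2 := by
  have key : ⟪((pH - ph : V) : H), uh - ubar⟫
      = -⟪(yh : H) - ybar, (yh : H) - (yH : H)⟫ := by
    have h1 := hG1 (ph - pH)
    have h2 := hG2 (yh - yH)
    rw [h1] at h2
    have hcomm : ⟪((pH - ph : V) : H), uh - ubar⟫
        = -⟪uh - ubar, ((ph - pH : V) : H)⟫ := by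
      rw [real_inner_comm]
      have : ((pH - ph : V) : H) = -((ph - pH : V) : H) := by
        push_cast; abel
      rw [this, inner_neg_right]
    rw [hcomm, h2]
    have : ((yh - yH : V) : H) = (yh : H) - (yH : H) := by push_cast; abel
    rw [this]
  rw [key]
  set a := (yh : H) - ybar with ha
  set c := ybar - (yH : H) with hc
  have hsplit : (yh : H) - (yH : H) = a + c := by rw [ha, hc]; abel
  rw [hsplit, inner_add_right, real_inner_self_eq_norm_sq]
  have hca : ‖ybar - (yh : H)‖ = ‖a‖ := by rw [ha, ← norm_neg]; abel_nf
  rw [hca]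
  have hcs : ⟪a, c⟫ ≥ -(‖a‖ * ‖c‖) := neg_le_of_abs_le (abs_real_inner_le_norm a c)
  nlinarith [norm_nonneg a, norm_nonneg c, sq_nonneg (‖a‖ - ‖c‖)]
end

section
/- Under the Galerkin error relations and the L²-coercivity of the CutFEM form, the estimate (4.5) of Theorem 4.2 holds with explicit constant: ‖p̄ − p̄_h‖ ≤ ‖p̄ − p^h‖ + (1/c)‖ȳ − ȳ_h‖. -/
open scoped RealInnerProductSpace

/-- Estimate (4.5) of Theorem 4.2 with explicit constant:
`‖p̄ − p̄_h‖ ≤ ‖p̄ − p^h‖ + (1/c)‖ȳ − ȳ_h‖`. -/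
theorem cutfem_error_estimate_4_5
    {H : Type*} [NormedAddCommGroup H] [InnerProductSpace ℝ H]
    (V : Submodule ℝ H) (b : V →ₗ[ℝ] V →ₗ[ℝ] ℝ)
    (ybar pbar : H) (yh ph : V) (pH : V)
    (hG2 : ∀ v : V, b v (ph - pH) = ⟪(yh : H) - ybar, (v : H)⟫)
    (c : ℝ) (hc : 0 < c)
    (hcoer : ∀ v : V, c * ‖(v : H)‖ ^ 2 ≤ b v v) :
    ‖pbar - (ph : H)‖ ≤ ‖pbar - (pH : H)‖ + (1 / c) * ‖ybar - (yh : H)‖ := by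
  set e : V := ph - pH with he
  have h1 : c * ‖(e : H)‖ ^ 2 ≤ ‖ybar - (yh : H)‖ * ‖(e : H)‖ := by
    calc c * ‖(e : H)‖ ^ 2 ≤ b e e := hcoer e
      _ = ⟪(yh : H) - ybar, (e : H)⟫ := hG2 e
      _ ≤ ‖(yh : H) - ybar‖ * ‖(e : H)‖ := real_inner_le_norm _ _
      _ = ‖ybar - (yh : H)‖ * ‖(e : H)‖ := by rw [norm_sub_rev]
  have h2 : ‖(e : H)‖ ≤ (1 / c) * ‖ybar - (yh : H)‖ := by
    rcases eq_or_lt_of_le (norm_nonneg (e : H)) with h0 | h0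
    · rw [← h0]
      positivity
    · rw [div_mul_eq_mul_div, le_div_iff₀ hc]
      nlinarith [h1]
  calc ‖pbar - (ph : H)‖ ≤ ‖pbar - (pH : H)‖ + ‖(pH : H) - (ph : H)‖ :=
        norm_sub_le_norm_sub_add_norm_sub _ _ _
    _ ≤ ‖pbar - (pH : H)‖ + (1 / c) * ‖ybar - (yh : H)‖ := by
        have : ‖(pH : H) - (ph : H)‖ = ‖(e : H)‖ := by
          rw [he]
          push_cast
          rw [norm_sub_rev]
        linarith [h2, this ▸ h2]
end

section
/- Under the Galerkin error relation for the state and the coercivity of the CutFEM form with respect to the mesh-dependent norm M, the estimate (4.6) of Theorem 4.2 holds with explicit constant: N(ȳ − ȳ_h) ≤ N(ȳ − y^h) + (C_*·C_P/c)‖ū − ū_h‖. -/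
open scoped RealInnerProductSpace

/-- Estimate (4.6) of Theorem 4.2 with explicit constant:
`|||ȳ − ȳ_h|||_* ≤ |||ȳ − y^h|||_* + (C_*·C_P/c)‖ū − ū_h‖`. -/
theorem cutfem_error_estimate_4_6
    {H : Type*} [NormedAddCommGroup H] [InnerProductSpace ℝ H]
    (V : Submodule ℝ H) (b : V →ₗ[ℝ] V →ₗ[ℝ] ℝ)
    (ybar ubar uh : H) (yh yH : V)
    (hG1 : ∀ v : V, b (yh - yH) v = ⟪uh - ubar, (v : H)⟫)
    (N M : Seminorm ℝ H) (c Cs CP : ℝ) (hc : 0 < c) (hCs : 0 < Cs) (hCP : 0 < CP)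
    (hcoer : ∀ v : V, c * (M (v : H)) ^ 2 ≤ b v v)
    (hN : ∀ v : V, N (v : H) ≤ Cs * M (v : H))
    (hP : ∀ v : V, ‖(v : H)‖ ≤ CP * M (v : H)) :
    N (ybar - (yh : H)) ≤ N (ybar - (yH : H)) + (Cs * CP / c) * ‖ubar - uh‖ := by
  set e : V := yh - yH with he
  -- key: c * M e ^ 2 ≤ ‖ubar - uh‖ * (CP * M e)
  have h1 : c * (M (e : H)) ^ 2 ≤ ‖ubar - uh‖ * (CP * M (e : H)) := by
    calc c * (M (e : H)) ^ 2 ≤ b e e := hcoer e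
      _ = ⟪uh - ubar, (e : H)⟫ := hG1 e
      _ ≤ ‖uh - ubar‖ * ‖(e : H)‖ := real_inner_le_norm _ _
      _ ≤ ‖ubar - uh‖ * (CP * M (e : H)) := by
          rw [(neg_sub ubar uh).symm, norm_neg]
          exact mul_le_mul_of_nonneg_left (hP e) (norm_nonneg _)
  have hMe : c * M (e : H) ≤ CP * ‖ubar - uh‖ := by
    rcases eq_or_lt_of_le (apply_nonneg M (e : H)) with h0 | h0
    · rw [← h0, mul_zero]
      positivity
    · have := h1
      nlinarith
  have hNe : N ((e : V) : H) ≤ Cs * CP / c * ‖ubar - uh‖ := by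
    have := hN e
    have hc' : c ≠ 0 := ne_of_gt hc
    rw [div_mul_eq_mul_div, le_div_iff₀ hc]
    nlinarith [hMe, hCs.le]
  calc N (ybar - (yh : H)) = N ((ybar - (yH : H)) + -((e : V) : H)) := by
        congr 1
        simp [he]
    _ ≤ N (ybar - (yH : H)) + N (-((e : V) : H)) := map_add_le_add N _ _
    _ = N (ybar - (yH : H)) + N ((e : V) : H) := by rw [map_neg_eq_map]
    _ ≤ N (ybar - (yH : H)) + Cs * CP / c * ‖ubar - uh‖ := by linarith
end

section
/- Under the Galerkin error relation for the adjoint and the coercivity of the CutFEM form with respect to the mesh-dependent norm M, the estimate (4.7) of Theorem 4.2 holds with explicit constant: N(p̄ − p̄_h) ≤ N(p̄ − p^h) + (C_*·C_P/c)‖ȳ − ȳ_h‖. -/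
/-!
The discrete error `e = p̄_h − p^h` lies in `V`, so coercivity, the Galerkin relation tested with
`v = e` and Cauchy–Schwarz give `c·M(e)² ≤ ‖ȳ − ȳ_h‖·C_P·M(e)`, i.e. the energy bound
`M(e) ≤ (C_P/c)‖ȳ − ȳ_h‖`. The triangle inequality for `N` and `N ≤ C_*·M` on `V` finish the proof.
-/

open scoped RealInnerProductSpace

theorem le_div_of_mul_sq_le_mul {c x K : ℝ} (hc : 0 < c) (hx : 0 ≤ x) (hK : 0 ≤ K)
    (h : c * x ^ 2 ≤ K * x) : x ≤ K / c := by
  rw [le_div_iff₀ hc]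
  rcases hx.eq_or_lt with rfl | hx
  · simpa using hK
  · nlinarith

theorem Seminorm.le_div_mul_norm_of_coercive {H : Type*} [NormedAddCommGroup H]
    [InnerProductSpace ℝ H] (M : Seminorm ℝ H) {c CP : ℝ} (hc : 0 < c) (hCP : 0 ≤ CP) {e r : H}
    (hcoer : c * M e ^ 2 ≤ ⟪r, e⟫) (hP : ‖e‖ ≤ CP * M e) :
    M e ≤ CP / c * ‖r‖ := by
  have energy : c * M e ^ 2 ≤ (CP * ‖r‖) * M e :=
    calc c * M e ^ 2 ≤ ⟪r, e⟫ := hcoer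
      _ ≤ ‖r‖ * ‖e‖ := real_inner_le_norm r e
      _ ≤ ‖r‖ * (CP * M e) := by gcongr
      _ = (CP * ‖r‖) * M e := by ring
  rw [div_mul_eq_mul_div]
  exact le_div_of_mul_sq_le_mul hc (apply_nonneg M e) (by positivity) energy

/-- Estimate (4.7) of Theorem 4.2 with explicit constant:
`|||p̄ − p̄_h|||_* ≤ |||p̄ − p^h|||_* + (C_*·C_P/c)‖ȳ − ȳ_h‖`. -/
theorem cutfem_error_estimate_4_7
    {H : Type*} [NormedAddCommGroup H] [InnerProductSpace ℝ H]
    (V : Submodule ℝ H) (b : V →ₗ[ℝ] V →ₗ[ℝ] ℝ)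
    (ybar pbar : H) (yh ph pH : V)
    (hG2 : ∀ v : V, b v (ph - pH) = ⟪(yh : H) - ybar, (v : H)⟫)
    (N M : Seminorm ℝ H) (c Cs CP : ℝ) (hc : 0 < c) (hCs : 0 < Cs) (hCP : 0 < CP)
    (hcoer : ∀ v : V, c * (M (v : H)) ^ 2 ≤ b v v)
    (hN : ∀ v : V, N (v : H) ≤ Cs * M (v : H))
    (hP : ∀ v : V, ‖(v : H)‖ ≤ CP * M (v : H)) :
    N (pbar - (ph : H)) ≤ N (pbar - (pH : H)) + (Cs * CP / c) * ‖ybar - (yh : H)‖ := by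
  set e : V := ph - pH
  have energy : M (e : H) ≤ CP / c * ‖ybar - (yh : H)‖ := by
    rw [norm_sub_rev]
    exact M.le_div_mul_norm_of_coercive hc hCP.le ((hcoer e).trans_eq (hG2 e)) (hP e)
  have triangle : N (pbar - (ph : H)) ≤ N (pbar - (pH : H)) + N (e : H) := by
    have := le_map_add_map_sub N (pbar - (ph : H)) (pbar - (pH : H))
    rwa [sub_sub_sub_cancel_left, map_sub_rev N (pH : H)] at this
  calc N (pbar - (ph : H)) ≤ N (pbar - (pH : H)) + N (e : H) := triangle
    _ ≤ N (pbar - (pH : H)) + Cs * (CP / c * ‖ybar - (yh : H)‖) := by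
        gcongr
        exact (hN e).trans (by gcongr)
    _ = N (pbar - (pH : H)) + (Cs * CP / c) * ‖ybar - (yh : H)‖ := by ring
end

section
/- Under the Galerkin error relations, the continuous and discrete optimality conditions, and the L²-coercivity of the CutFEM form, the combined L²-error estimate of Theorem 4.3 holds with the explicit constant C = 1 + 1/α + 1/√α + 1/c + 1/(c·√α): ‖ȳ − ȳ_h‖ + ‖p̄ − p̄_h‖ + ‖ū − ū_h‖ ≤ C·(‖ȳ − y^h‖ + ‖p̄ − p^h‖). In particular, the errors of the optimal state, adjoint state and control are controlled by the approximation errors of the auxiliary CutFEM problems. -/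
set_option maxHeartbeats 1000000


open scoped RealInnerProductSpace

/-- Final scalar estimate used to assemble the combined error bound. -/
lemma cutfem_final_scalar_aux (s c A B : ℝ) (hs : 0 < s) (hc : 0 < c)
    (hA : 0 ≤ A) (hB : 0 ≤ B) :
    (A + B / s) + (B + (A + B / s) / c) + (A + B / s) / s ≤
      (1 + 1 / s ^ 2 + 1 / s + 1 / c + 1 / (c * s)) * (A + B) := by
  rw [← sub_nonneg]
  have h : (1 + 1 / s ^ 2 + 1 / s + 1 / c + 1 / (c * s)) * (A + B) -
      ((A + B / s) + (B + (A + B / s) / c) + (A + B / s) / s) =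
      (A * (c + s) + B * s ^ 2) / (c * s ^ 2) := by
    field_simp
    ring
  rw [h]
  positivity

/-- From `x² + u² ≤ x·A + u·B'` with all quantities nonnegative, `x ≤ A + B'`. -/
lemma cutfem_quadratic_aux (A B' x u : ℝ) (hA : 0 ≤ A) (hB : 0 ≤ B')
    (hx : 0 ≤ x) (hu : 0 ≤ u) (h : x ^ 2 + u ^ 2 ≤ x * A + u * B') :
    x ≤ A + B' := by
  nlinarith [sq_nonneg (2 * u - B'), sq_nonneg (x - A - B'), mul_nonneg hx hB]

/-- Combined L²-error estimate of Theorem 4.3, with explicit constant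
`C = 1 + 1/α + 1/√α + 1/c + 1/(c·√α)`:
`‖ȳ − ȳ_h‖ + ‖p̄ − p̄_h‖ + ‖ū − ū_h‖ ≤ C·(‖ȳ − y^h‖ + ‖p̄ − p^h‖)`. -/
theorem cutfem_combined_L2_error_estimate
    {H : Type*} [NormedAddCommGroup H] [InnerProductSpace ℝ H]
    (V : Submodule ℝ H) (b : V →ₗ[ℝ] V →ₗ[ℝ] ℝ)
    (α : ℝ) (hα : 0 < α)
    (ybar pbar ubar : H) (yh ph : V) (uh : H) (yH pH : V)
    (hcont : α • ubar + pbar = 0)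
    (hdisc : α • uh + (ph : H) = 0)
    (hG1 : ∀ v : V, b (yh - yH) v = ⟪uh - ubar, (v : H)⟫)
    (hG2 : ∀ v : V, b v (ph - pH) = ⟪(yh : H) - ybar, (v : H)⟫)
    (c : ℝ) (hc : 0 < c)
    (hcoer : ∀ v : V, c * ‖(v : H)‖ ^ 2 ≤ b v v) :
    ‖ybar - (yh : H)‖ + ‖pbar - (ph : H)‖ + ‖ubar - uh‖ ≤
      (1 + 1 / α + 1 / Real.sqrt α + 1 / c + 1 / (c * Real.sqrt α)) *
        (‖ybar - (yH : H)‖ + ‖pbar - (pH : H)‖) := by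
  set s := Real.sqrt α with hsdef
  have hs0 : 0 < s := Real.sqrt_pos.mpr hα
  have hs2 : s ^ 2 = α := Real.sq_sqrt hα.le
  have hss : s * s = α := by rw [← hs2]; ring
  set ey : V := yh - yH with hey
  set ep : V := ph - pH with hep
  set A := ‖ybar - (yH : H)‖ with hA
  set B := ‖pbar - (pH : H)‖ with hB
  set X := ‖ybar - (yh : H)‖ with hX
  set P := ‖pbar - (ph : H)‖ with hP
  set E := ‖(ep : H)‖ with hE
  have hA0 : 0 ≤ A := norm_nonneg _
  have hB0 : 0 ≤ B := norm_nonneg _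
  have hX0 : 0 ≤ X := norm_nonneg _
  have hP0 : 0 ≤ P := norm_nonneg _
  have hE0 : 0 ≤ E := norm_nonneg _
  -- the optimality conditions relate the control errors to the adjoint errors
  have hu : uh - ubar = α⁻¹ • (pbar - (ph : H)) := by
    have h : α • (uh - ubar) = pbar - (ph : H) := by
      linear_combination (norm := module) hdisc - hcont
    rw [← h, inv_smul_smul₀ hα.ne']
  have hU : ‖ubar - uh‖ = α⁻¹ * P := by
    rw [← norm_neg, neg_sub, hu, norm_smul, Real.norm_eq_abs, abs_of_pos (by positivity)]
  -- coercion facts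
  have heyH : (ey : H) = (yh : H) - (yH : H) := by simp [hey]
  have hepH : (ep : H) = (ph : H) - (pH : H) := by simp [hep]
  -- key inner-product identity coming from the two Galerkin error relations
  have e1 : (b ey) ep = ⟪(yh : H) - ybar, (ey : H)⟫ := hG2 ey
  have e2 : (b ey) ep = ⟪uh - ubar, (ep : H)⟫ := hG1 ep
  have e3 : ⟪ybar - (yh : H), (ey : H)⟫ = -(α⁻¹ * ⟪pbar - (ph : H), (ep : H)⟫) := by
    have h2 : ⟪uh - ubar, (ep : H)⟫ = α⁻¹ * ⟪pbar - (ph : H), (ep : H)⟫ := by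
      rw [hu, real_inner_smul_left]
    have h3 : ⟪(yh : H) - ybar, (ey : H)⟫ = α⁻¹ * ⟪pbar - (ph : H), (ep : H)⟫ := by
      rw [← e1, e2, h2]
    have h4 : ⟪ybar - (yh : H), (ey : H)⟫ = -⟪(yh : H) - ybar, (ey : H)⟫ := by
      rw [← inner_neg_left]; congr 1; abel
    rw [h4, h3]
  have hyd : ybar - (yh : H) = (ybar - (yH : H)) - (ey : H) := by rw [heyH]; abel
  have hpd : pbar - (ph : H) = (pbar - (pH : H)) - (ep : H) := by rw [hepH]; abel
  have hX2 : X ^ 2 = ⟪ybar - (yh : H), ybar - (yH : H)⟫ - ⟪ybar - (yh : H), (ey : H)⟫ := by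
    rw [hX, ← real_inner_self_eq_norm_sq]
    nth_rewrite 2 [hyd]
    rw [inner_sub_right]
  have hP2 : P ^ 2 = ⟪pbar - (ph : H), pbar - (pH : H)⟫ - ⟪pbar - (ph : H), (ep : H)⟫ := by
    rw [hP, ← real_inner_self_eq_norm_sq]
    nth_rewrite 2 [hpd]
    rw [inner_sub_right]
  have CS1 : ⟪ybar - (yh : H), ybar - (yH : H)⟫ ≤ X * A := real_inner_le_norm _ _
  have CS2 : ⟪pbar - (ph : H), pbar - (pH : H)⟫ ≤ P * B := real_inner_le_norm _ _
  have key : X ^ 2 + α⁻¹ * P ^ 2 ≤ X * A + α⁻¹ * (P * B) := by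
    have hinv : (0:ℝ) < α⁻¹ := by positivity
    nlinarith [mul_le_mul_of_nonneg_left CS2 hinv.le]
  -- rewrite with `s = √α` and extract the bounds on `X` and `P/s`
  have keyu : X ^ 2 + (P / s) ^ 2 ≤ X * A + (P / s) * (B / s) := by
    have h1 : (P / s) ^ 2 = α⁻¹ * P ^ 2 := by
      rw [div_pow, hs2]; ring
    have h2 : (P / s) * (B / s) = α⁻¹ * (P * B) := by
      rw [div_mul_div_comm, hss]; ring
    rw [h1, h2]; exact key
  have hBs : 0 ≤ B / s := div_nonneg hB0 hs0.le
  have hPs : 0 ≤ P / s := div_nonneg hP0 hs0.le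
  have hXM : X ≤ A + B / s :=
    cutfem_quadratic_aux A (B / s) X (P / s) hA0 hBs hX0 hPs keyu
  have hPM : P / s ≤ A + B / s := by
    have h := cutfem_quadratic_aux (B / s) A (P / s) X hBs hA0 hPs hX0 (by linarith)
    linarith
  -- coercivity bound: `c‖e_p‖ ≤ ‖ȳ − ȳ_h‖`
  have hcE : c * E ≤ X := by
    have h1 : c * E ^ 2 ≤ (b ep) ep := hcoer ep
    have h2 : (b ep) ep = ⟪(yh : H) - ybar, (ep : H)⟫ := hG2 ep
    have h3 : ⟪(yh : H) - ybar, (ep : H)⟫ ≤ X * E := by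
      have h4 := real_inner_le_norm ((yh : H) - ybar) (ep : H)
      rwa [norm_sub_rev] at h4
    nlinarith [sq_nonneg E]
  have hPc : P ≤ B + E := by
    rw [hP, hpd]; exact norm_sub_le _ _
  -- assemble the three error bounds
  have hPbound : P ≤ B + (A + B / s) / c := by
    have hEX : E ≤ X / c := by
      rw [le_div_iff₀ hc]; linarith [hcE]
    have hXc : X / c ≤ (A + B / s) / c := by gcongr
    linarith
  have hUbound : ‖ubar - uh‖ ≤ (A + B / s) / s := by
    rw [hU]
    have h1 : α⁻¹ * P = (P / s) / s := by
      rw [div_div, hss]; ring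
    rw [h1]
    gcongr
  calc ‖ybar - (yh : H)‖ + ‖pbar - (ph : H)‖ + ‖ubar - uh‖
      ≤ (A + B / s) + (B + (A + B / s) / c) + (A + B / s) / s :=
        add_le_add (add_le_add hXM hPbound) hUbound
    _ ≤ (1 + 1 / s ^ 2 + 1 / s + 1 / c + 1 / (c * s)) * (A + B) :=
        cutfem_final_scalar_aux s c A B hs0 hc hA0 hB0
    _ = (1 + 1 / α + 1 / Real.sqrt α + 1 / c + 1 / (c * Real.sqrt α)) * (A + B) := by
        rw [hs2]
end
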